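/- Suppose x₁,…,xₙ : ℝ → ℝ² solve the point vortex ODE on [0,T) with all masses m₂,…,mₙ positive, m₁ negative, −m₁ > m₂+⋯+mₙ, and Σᵢ mᵢxᵢ(0) = 0. Then all trajectories are uniformly bounded on [0,T): there exists M depending only on the masses and the initial data such that |xᵢ(t)| ≤ M for all i and all t ∈ [0,T). -/

import Mathlib

/-!
Both the linear impulse `∑ mᵢ xᵢ` and the angular impulse `I = ∑ mᵢ |xᵢ|²` are conserved, because
the pairwise interaction `mᵢ mⱼ K(xᵢ, xⱼ)` is antisymmetric and orthogonal to `xᵢ - xⱼ`. Writing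
`a = -m₁` and `μ = m₂ + ⋯ + mₙ`, the first law gives `a |x₁| ≤ ∑ᵢ₌₂ mᵢ |xᵢ|`, so by Cauchy–Schwarz
`a² |x₁|² ≤ μ (I + a |x₁|²)`. As `a > μ` this bounds `|x₁|²` by `μ I / (a (a - μ))`, and then each
`mᵢ |xᵢ|² ≤ I + a |x₁|²` is bounded as well.
-/

open scoped RealInnerProductSpace
open Finset

noncomputable def perp (z : EuclideanSpace ℝ (Fin 2)) : EuclideanSpace ℝ (Fin 2) :=
  WithLp.toLp 2 (fun i : Fin 2 => if i = 0 then -(z 1) else z 0)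

noncomputable def K (x y : EuclideanSpace ℝ (Fin 2)) : EuclideanSpace ℝ (Fin 2) :=
  (‖x - y‖ ^ 2)⁻¹ • perp (x - y)

lemma perp_neg (z : EuclideanSpace ℝ (Fin 2)) : perp (-z) = -perp z := by
  ext i
  fin_cases i <;> simp [perp]

lemma inner_self_perp (z : EuclideanSpace ℝ (Fin 2)) : ⟪z, perp z⟫ = 0 := by
  simp [PiLp.inner_apply, Fin.sum_univ_two, perp, mul_comm]

lemma K_swap (x y : EuclideanSpace ℝ (Fin 2)) : K y x = -K x y := by
  rw [K, K, ← neg_sub x y, perp_neg, norm_neg, smul_neg]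

lemma inner_K_left_eq_inner_K_right (x y : EuclideanSpace ℝ (Fin 2)) :
    ⟪x, K x y⟫ = ⟪y, K x y⟫ := by
  have h : ⟪x - y, K x y⟫ = 0 := by rw [K, real_inner_smul_right, inner_self_perp, mul_zero]
  rwa [inner_sub_left, sub_eq_zero] at h

lemma sum_sum_erase_eq_zero_of_antisymm {ι M : Type*} [Fintype ι] [DecidableEq ι]
    [AddCommGroup M] (f : ι → ι → M) (hf : ∀ i j, f j i = -f i j) :
    ∑ i, ∑ j ∈ univ.erase i, f i j = 0 := by
  rw [sum_sigma']
  refine sum_involution (fun p _ => ⟨p.2, p.1⟩) (fun p _ => by rw [hf p.1 p.2, add_neg_cancel])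
    (fun p hp _ h => ?_) (fun p hp => ?_) (fun p _ => rfl)
  · simp only [mem_sigma, mem_erase] at hp
    exact hp.2.1 (congrArg Sigma.fst h)
  · simp only [mem_sigma, mem_erase] at hp ⊢
    exact ⟨mem_univ _, hp.2.1.symm, mem_univ _⟩

lemma Convex.eq_of_hasDerivWithinAt_eq_zero {E : Type*} [NormedAddCommGroup E]
    [NormedSpace ℝ E] {s : Set ℝ} (hs : Convex ℝ s) {f : ℝ → E}
    (hf : ∀ t ∈ s, HasDerivWithinAt f 0 s t)
    {t₀ t : ℝ} (ht₀ : t₀ ∈ s) (ht : t ∈ s) : f t = f t₀ := by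
  have := hs.norm_image_sub_le_of_norm_hasDerivWithin_le hf (C := 0) (fun _ _ => by simp) ht₀ ht
  rwa [zero_mul, norm_le_zero_iff, sub_eq_zero] at this

section Vortex

variable {ι : Type*} [Fintype ι] [DecidableEq ι] (m : ι → ℝ)

noncomputable def vortexVelocity (z : ι → EuclideanSpace ℝ (Fin 2)) (i : ι) :
    EuclideanSpace ℝ (Fin 2) :=
  ∑ j ∈ univ.erase i, m j • K (z i) (z j)

lemma sum_smul_vortexVelocity (z : ι → EuclideanSpace ℝ (Fin 2)) :
    ∑ i, m i • vortexVelocity m z i = 0 := by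
  simp only [vortexVelocity, smul_sum, smul_smul]
  exact sum_sum_erase_eq_zero_of_antisymm (fun i j => (m i * m j) • K (z i) (z j))
    fun i j => by rw [K_swap, smul_neg, mul_comm]

lemma sum_mul_inner_vortexVelocity (z : ι → EuclideanSpace ℝ (Fin 2)) :
    ∑ i, m i * ⟪z i, vortexVelocity m z i⟫ = 0 := by
  simp only [vortexVelocity, inner_sum, real_inner_smul_right, mul_sum, ← mul_assoc]
  exact sum_sum_erase_eq_zero_of_antisymm (fun i j => m i * m j * ⟪z i, K (z i) (z j)⟫)
    fun i j => by rw [inner_K_left_eq_inner_K_right, K_swap, inner_neg_right, mul_comm (m j)]; ring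

variable {m} {s : Set ℝ} {x : ι → ℝ → EuclideanSpace ℝ (Fin 2)}

lemma Convex.sum_smul_eq_of_vortex (hs : Convex ℝ s)
    (hode : ∀ t ∈ s, ∀ i, HasDerivWithinAt (x i) (vortexVelocity m (fun j => x j t) i) s t)
    {t₀ t : ℝ} (ht₀ : t₀ ∈ s) (ht : t ∈ s) : ∑ i, m i • x i t = ∑ i, m i • x i t₀ := by
  refine hs.eq_of_hasDerivWithinAt_eq_zero (f := fun t => ∑ i, m i • x i t) (fun t ht => ?_) ht₀ ht
  rw [← sum_smul_vortexVelocity m (fun j => x j t)]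
  exact HasDerivWithinAt.fun_sum fun i _ => (hode t ht i).const_smul (m i)

lemma Convex.sum_mul_norm_sq_eq_of_vortex (hs : Convex ℝ s)
    (hode : ∀ t ∈ s, ∀ i, HasDerivWithinAt (x i) (vortexVelocity m (fun j => x j t) i) s t)
    {t₀ t : ℝ} (ht₀ : t₀ ∈ s) (ht : t ∈ s) :
    ∑ i, m i * ‖x i t‖ ^ 2 = ∑ i, m i * ‖x i t₀‖ ^ 2 := by
  refine hs.eq_of_hasDerivWithinAt_eq_zero (f := fun t => ∑ i, m i * ‖x i t‖ ^ 2)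
    (fun t ht => ?_) ht₀ ht
  have hd := HasDerivWithinAt.fun_sum fun i (_ : i ∈ univ) =>
    (hode t ht i).norm_sq.const_mul (m i)
  have hzero := sum_mul_inner_vortexVelocity m (fun j => x j t)
  convert hd using 1
  rw [← mul_zero 2, ← hzero, mul_sum]
  exact sum_congr rfl fun i _ => by ring

end Vortex

section Bound

variable {E ι : Type*} [SeminormedAddCommGroup E] [NormedSpace ℝ E] [Fintype ι] [DecidableEq ι]
  {m : ι → ℝ} {i₀ : ι}

lemma mul_add_sum_erase_mul_norm_sq_le (hm : ∀ i ≠ i₀, 0 ≤ m i) {z : ι → E}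
    (hz : ∑ i, m i • z i = 0) :
    m i₀ * (m i₀ + ∑ i ∈ univ.erase i₀, m i) * ‖z i₀‖ ^ 2 ≤
      (∑ i ∈ univ.erase i₀, m i) * ∑ i, m i * ‖z i‖ ^ 2 := by
  have hm' : ∀ i ∈ univ.erase i₀, 0 ≤ m i := fun i hi => hm i (ne_of_mem_erase hi)
  have hsplit : ∑ i, m i * ‖z i‖ ^ 2 = ∑ i ∈ univ.erase i₀, m i * ‖z i‖ ^ 2 + m i₀ * ‖z i₀‖ ^ 2 :=
    (sum_erase_add _ _ (mem_univ i₀)).symm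
  have htriangle : |m i₀| * ‖z i₀‖ ≤ ∑ i ∈ univ.erase i₀, m i * ‖z i‖ := by
    have hbal : -(m i₀ • z i₀) = ∑ i ∈ univ.erase i₀, m i • z i := by
      rw [← add_eq_zero_iff_neg_eq', sum_erase_add _ _ (mem_univ i₀), hz]
    calc |m i₀| * ‖z i₀‖ = ‖∑ i ∈ univ.erase i₀, m i • z i‖ := by
          rw [← hbal, norm_neg, norm_smul, Real.norm_eq_abs]
      _ ≤ ∑ i ∈ univ.erase i₀, ‖m i • z i‖ := norm_sum_le _ _
      _ = ∑ i ∈ univ.erase i₀, m i * ‖z i‖ := sum_congr rfl fun i hi => by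
          rw [norm_smul, Real.norm_of_nonneg (hm' i hi)]
  have hcs : (∑ i ∈ univ.erase i₀, m i * ‖z i‖) ^ 2 ≤
      (∑ i ∈ univ.erase i₀, m i) * ∑ i ∈ univ.erase i₀, m i * ‖z i‖ ^ 2 :=
    sum_sq_le_sum_mul_sum_of_sq_le_mul _ hm'
      (fun i hi => mul_nonneg (hm' i hi) (sq_nonneg _)) fun i _ => le_of_eq (by ring)
  have hsq : (m i₀ * ‖z i₀‖) ^ 2 ≤ (∑ i ∈ univ.erase i₀, m i * ‖z i‖) ^ 2 := by
    rw [← sq_abs, abs_mul, abs_norm]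
    exact pow_le_pow_left₀ (by positivity) htriangle 2
  rw [hsplit]
  linear_combination hsq.trans hcs

lemma exists_norm_le_of_sum_smul_eq_zero (hm : ∀ i ≠ i₀, 0 < m i)
    (hbig : ∑ i ∈ univ.erase i₀, m i < -m i₀) (I : ℝ) :
    ∃ M, ∀ z : ι → E, ∑ i, m i • z i = 0 → ∑ i, m i * ‖z i‖ ^ 2 = I → ∀ i, ‖z i‖ ≤ M := by
  set μ := ∑ i ∈ univ.erase i₀, m i
  have hμ : 0 ≤ μ := sum_nonneg fun i hi => (hm i (ne_of_mem_erase hi)).le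
  have hpos : 0 < m i₀ * (m i₀ + μ) := by nlinarith
  have hbound₀ : ∀ z : ι → E, ∑ i, m i • z i = 0 → ∑ i, m i * ‖z i‖ ^ 2 = I →
      ‖z i₀‖ ^ 2 ≤ μ * I / (m i₀ * (m i₀ + μ)) := fun z hz hI => by
    rw [le_div_iff₀ hpos, ← hI, mul_comm]
    exact mul_add_sum_erase_mul_norm_sq_le (fun i hi => (hm i hi).le) hz
  suffices ∀ i, ∃ C, ∀ z : ι → E, ∑ i, m i • z i = 0 → ∑ i, m i * ‖z i‖ ^ 2 = I →
      ‖z i‖ ^ 2 ≤ C by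
    choose C hC using this
    obtain ⟨M, hM⟩ := (Set.finite_range C).bddAbove
    refine ⟨√M, fun z hz hI i => ?_⟩
    rw [← abs_norm]
    exact Real.abs_le_sqrt ((hC i z hz hI).trans (hM ⟨i, rfl⟩))
  intro i
  by_cases hi : i = i₀
  · exact ⟨_, hi ▸ hbound₀⟩
  refine ⟨(I - m i₀ * (μ * I / (m i₀ * (m i₀ + μ)))) / m i, fun z hz hI => ?_⟩
  have hsingle : m i * ‖z i‖ ^ 2 ≤ ∑ j ∈ univ.erase i₀, m j * ‖z j‖ ^ 2 :=
    single_le_sum (f := fun j => m j * ‖z j‖ ^ 2)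
      (fun j hj => mul_nonneg (hm j (ne_of_mem_erase hj)).le (sq_nonneg _))
      (mem_erase.mpr ⟨hi, mem_univ i⟩)
  have hsplit : I = ∑ j ∈ univ.erase i₀, m j * ‖z j‖ ^ 2 + m i₀ * ‖z i₀‖ ^ 2 := by
    rw [← hI, sum_erase_add _ _ (mem_univ i₀)]
  have hfirst := mul_le_mul_of_nonpos_left (hbound₀ z hz hI) (by linarith : m i₀ ≤ 0)
  rw [le_div_iff₀ (hm i hi)]
  linarith

end Bound

theorem one_big_negative_bounded_general (n : ℕ) (m : Fin (n + 1) → ℝ)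
    (hm : ∀ i, i ≠ 0 → 0 < m i)
    (hbig : -m 0 > ∑ i ∈ Finset.univ.erase 0, m i)
    (T : ℝ)
    (x : Fin (n + 1) → ℝ → EuclideanSpace ℝ (Fin 2))
    (hode : ∀ t ∈ Set.Ico (0 : ℝ) T, ∀ i, HasDerivWithinAt (x i)
      (∑ j ∈ Finset.univ.erase i, m j • K (x i t) (x j t)) (Set.Ico (0 : ℝ) T) t)
    (hinit : ∑ i, m i • x i 0 = 0) :
    ∃ M : ℝ, ∀ i, ∀ t ∈ Set.Ico (0 : ℝ) T, ‖x i t‖ ≤ M := by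
  obtain ⟨M, hM⟩ := exists_norm_le_of_sum_smul_eq_zero (E := EuclideanSpace ℝ (Fin 2)) hm hbig
    (∑ i, m i * ‖x i 0‖ ^ 2)
  refine ⟨M, fun i t ht => ?_⟩
  have h0 : (0 : ℝ) ∈ Set.Ico 0 T := ⟨le_rfl, ht.1.trans_lt ht.2⟩
  refine hM (fun j => x j t) ?_ ?_ i
  · rw [(convex_Ico 0 T).sum_smul_eq_of_vortex hode h0 ht, hinit]
  · exact (convex_Ico 0 T).sum_mul_norm_sq_eq_of_vortex hode h0 ht

theorem one_big_negative_bounded (n : ℕ) (m : Fin (n + 1) → ℝ)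
    (hm0 : m 0 < 0) (hm : ∀ i, i ≠ 0 → 0 < m i)
    (hbig : -m 0 > ∑ i ∈ Finset.univ.erase 0, m i)
    (T : ℝ) (hT : 0 < T)
    (x : Fin (n + 1) → ℝ → EuclideanSpace ℝ (Fin 2))
    (hsep : ∀ t ∈ Set.Ico (0 : ℝ) T, ∀ i j, i ≠ j → x i t ≠ x j t)
    (hode : ∀ t ∈ Set.Ico (0 : ℝ) T, ∀ i, HasDerivWithinAt (x i)
      (∑ j ∈ Finset.univ.erase i, m j • K (x i t) (x j t)) (Set.Ico (0 : ℝ) T) t)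
    (hinit : ∑ i, m i • x i 0 = 0) :
    ∃ M : ℝ, ∀ i, ∀ t ∈ Set.Ico (0 : ℝ) T, ‖x i t‖ ≤ M :=
  one_big_negative_bounded_general n m hm hbig T x hode hinit
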